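/- arXiv:2507.00060 — 3 statements merged into one kernel-verified Lean document; each statement's English description precedes it below -/
import Mathlib

section
/- For radially closed star sets A₁, A₂ ⊆ ℝ^d, the radial excess e_r(A₁,A₂) := sup_{a ∈ A₁} d_r(a,A₂) equals sup_{x ∈ ℝ^d} (d_r(x,A₂) − d_r(x,A₁)). -/
open scoped ENNReal

noncomputable section

/-- Radial function of a set `A ⊆ ℝ^d` in direction `θ`. -/
def radialFn {d : ℕ} (A : Set (EuclideanSpace ℝ (Fin d)))
    (θ : EuclideanSpace ℝ (Fin d)) : ℝ≥0∞ :=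
  sSup (ENNReal.ofReal '' {r : ℝ | 0 ≤ r ∧ r • θ ∈ A})

/-- A star set: nonempty and closed under scaling by `t ∈ [0,1]`. -/
def IsStarSet {d : ℕ} (A : Set (EuclideanSpace ℝ (Fin d))) : Prop :=
  A.Nonempty ∧ ∀ a ∈ A, ∀ t : ℝ, 0 ≤ t → t ≤ 1 → t • a ∈ A

/-- A star body: a radially closed star set. -/
def IsStarBody {d : ℕ} (A : Set (EuclideanSpace ℝ (Fin d))) : Prop :=
  IsStarSet A ∧ ∀ θ : EuclideanSpace ℝ (Fin d), ‖θ‖ = 1 → radialFn A θ ≠ ⊤ →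
    (radialFn A θ).toReal • θ ∈ A

open scoped Classical in
/-- The radial distance from a point `x` to a star body `A`:
`0` if `x ∈ A`, and `‖x‖ - ρ_A(x/‖x‖)` otherwise. -/
def radialDist {d : ℕ} (x : EuclideanSpace ℝ (Fin d))
    (A : Set (EuclideanSpace ℝ (Fin d))) : ℝ :=
  if x ∈ A then 0 else ‖x‖ - (radialFn A (‖x‖⁻¹ • x)).toReal

/-!
Write a point outside `A₁` as `x = t • θ` with `‖θ‖ = 1`. In `ℝ≥0∞` the radial distance of
`t • θ` to a star body `A` is the truncated difference `t - ρ_A(θ)`, so the difference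
`d_r(x, A₂) - d_r(x, A₁)` is `(t - ρ₂) - (t - ρ₁) ≤ ρ₁ - ρ₂`, which is the radial distance
to `A₂` of the boundary point `ρ₁ • θ ∈ A₁`. Points of `A₁` contribute the same to both
suprema.
-/

lemma exists_nonneg_smul_unit_eq {E : Type*} [NormedAddCommGroup E] [NormedSpace ℝ E] {x : E}
    (hx : x ≠ 0) : ∃ t : ℝ, ∃ θ : E, 0 ≤ t ∧ ‖θ‖ = 1 ∧ t • θ = x :=
  ⟨‖x‖, ‖x‖⁻¹ • x, norm_nonneg x, norm_smul_inv_norm hx,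
    by rw [smul_smul, mul_inv_cancel₀ (norm_ne_zero_iff.mpr hx), one_smul]⟩

variable {d : ℕ} {A : Set (EuclideanSpace ℝ (Fin d))} {θ x : EuclideanSpace ℝ (Fin d)}

lemma ofReal_le_radialFn {r : ℝ} (hr : 0 ≤ r) (hmem : r • θ ∈ A) :
    ENNReal.ofReal r ≤ radialFn A θ :=
  le_sSup ⟨r, ⟨hr, hmem⟩, rfl⟩

lemma radialDist_of_mem (hx : x ∈ A) : radialDist x A = 0 := if_pos hx

lemma radialDist_of_notMem (hx : x ∉ A) :
    radialDist x A = ‖x‖ - (radialFn A (‖x‖⁻¹ • x)).toReal := if_neg hx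

namespace IsStarSet

lemma zero_mem (hA : IsStarSet A) : (0 : EuclideanSpace ℝ (Fin d)) ∈ A := by
  obtain ⟨⟨a, ha⟩, hstar⟩ := hA
  simpa using hstar a ha 0 le_rfl zero_le_one

lemma smul_mem_of_le (hA : IsStarSet A) {r s : ℝ} (hr : r • θ ∈ A) (hs : 0 ≤ s)
    (hsr : s ≤ r) : s • θ ∈ A := by
  rcases (hs.trans hsr).eq_or_lt with rfl | hr0
  · rwa [le_antisymm hsr hs]
  · simpa [smul_smul, div_mul_cancel₀ _ hr0.ne'] using
      hA.2 _ hr (s / r) (div_nonneg hs hr0.le) (div_le_one_of_le₀ hsr hr0.le)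

lemma smul_mem_of_ofReal_lt_radialFn (hA : IsStarSet A) {t : ℝ} (ht : 0 ≤ t)
    (hlt : ENNReal.ofReal t < radialFn A θ) : t • θ ∈ A := by
  obtain ⟨_, ⟨s, ⟨hs, hsA⟩, rfl⟩, hts⟩ := lt_sSup_iff.mp hlt
  exact hA.smul_mem_of_le hsA ht ((ENNReal.ofReal_lt_ofReal_iff_of_nonneg ht).mp hts).le

lemma ne_zero_of_notMem (hA : IsStarSet A) (hx : x ∉ A) : x ≠ 0 :=
  fun h => hx (h ▸ hA.zero_mem)

end IsStarSet

lemma radialDist_smul_of_notMem (hA : IsStarSet A) (hθ : ‖θ‖ = 1) {t : ℝ} (ht : 0 ≤ t)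
    (hx : t • θ ∉ A) : radialDist (t • θ) A = t - (radialFn A θ).toReal := by
  have ht0 : t ≠ 0 := by rintro rfl; exact hx (by simpa using hA.zero_mem)
  rw [radialDist_of_notMem hx, norm_smul, hθ, mul_one, Real.norm_of_nonneg ht, smul_smul,
    inv_mul_cancel₀ ht0, one_smul]

namespace IsStarBody

lemma smul_mem_iff (hA : IsStarBody A) (hθ : ‖θ‖ = 1) {t : ℝ} (ht : 0 ≤ t) :
    t • θ ∈ A ↔ ENNReal.ofReal t ≤ radialFn A θ := by
  refine ⟨ofReal_le_radialFn ht, fun hle => ?_⟩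
  by_cases htop : radialFn A θ = ⊤
  · exact hA.1.smul_mem_of_ofReal_lt_radialFn ht (htop ▸ ENNReal.ofReal_lt_top)
  · exact hA.1.smul_mem_of_le (hA.2 θ hθ htop) ht ((ENNReal.ofReal_le_iff_le_toReal htop).mp hle)

lemma radialFn_lt_of_smul_notMem (hA : IsStarBody A) (hθ : ‖θ‖ = 1) {t : ℝ} (ht : 0 ≤ t)
    (hx : t • θ ∉ A) : radialFn A θ < ENNReal.ofReal t :=
  not_le.mp fun h => hx ((hA.smul_mem_iff hθ ht).mpr h)

lemma ofReal_radialDist_smul (hA : IsStarBody A) (hθ : ‖θ‖ = 1) {t : ℝ} (ht : 0 ≤ t) :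
    ENNReal.ofReal (radialDist (t • θ) A) = ENNReal.ofReal t - radialFn A θ := by
  by_cases hx : t • θ ∈ A
  · rw [radialDist_of_mem hx, ENNReal.ofReal_zero, eq_comm, tsub_eq_zero_iff_le]
    exact (hA.smul_mem_iff hθ ht).mp hx
  · rw [radialDist_smul_of_notMem hA.1 hθ ht hx, ENNReal.ofReal_sub _ ENNReal.toReal_nonneg,
      ENNReal.ofReal_toReal (hA.radialFn_lt_of_smul_notMem hθ ht hx).ne_top]

lemma radialDist_nonneg (hA : IsStarBody A) (x : EuclideanSpace ℝ (Fin d)) :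
    0 ≤ radialDist x A := by
  by_cases hx : x ∈ A
  · rw [radialDist_of_mem hx]
  · obtain ⟨t, θ, ht, hθ, rfl⟩ := exists_nonneg_smul_unit_eq (hA.1.ne_zero_of_notMem hx)
    rw [radialDist_smul_of_notMem hA.1 hθ ht hx, sub_nonneg]
    exact (ENNReal.toReal_lt_of_lt_ofReal (hA.radialFn_lt_of_smul_notMem hθ ht hx)).le

end IsStarBody

theorem radialExcess_eq_sup_diff {d : ℕ} (A₁ A₂ : Set (EuclideanSpace ℝ (Fin d)))
    (hA₁ : IsStarBody A₁) (hA₂ : IsStarBody A₂) :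
    (⨆ a : A₁, ENNReal.ofReal (radialDist (a : EuclideanSpace ℝ (Fin d)) A₂)) =
      ⨆ x : EuclideanSpace ℝ (Fin d),
        ENNReal.ofReal (radialDist x A₂ - radialDist x A₁) := by
  refine le_antisymm (iSup_le fun a => le_iSup_of_le (a : EuclideanSpace ℝ (Fin d)) ?_)
    (iSup_le fun x => ?_)
  · rw [radialDist_of_mem a.2, sub_zero]
  by_cases hx : x ∈ A₁
  · exact le_iSup_of_le ⟨x, hx⟩ (by rw [radialDist_of_mem hx, sub_zero])
  obtain ⟨t, θ, ht, hθ, rfl⟩ := exists_nonneg_smul_unit_eq (hA₁.1.ne_zero_of_notMem hx)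
  have hρ₁ : radialFn A₁ θ ≠ ⊤ := (hA₁.radialFn_lt_of_smul_notMem hθ ht hx).ne_top
  refine le_iSup_of_le ⟨_, hA₁.2 θ hθ hρ₁⟩ ?_
  rw [ENNReal.ofReal_sub _ (hA₁.radialDist_nonneg _), hA₂.ofReal_radialDist_smul hθ ht,
    hA₁.ofReal_radialDist_smul hθ ht, hA₂.ofReal_radialDist_smul hθ ENNReal.toReal_nonneg,
    ENNReal.ofReal_toReal hρ₁]
  exact tsub_tsub_tsub_le_tsub
end
end

section
/- If (A_n) is a sequence of star bodies in ℝ^d such that the radial distance functionals d_r(·,A_n) converge pointwise to a function f : ℝ^d → ℝ, then f = d_r(·,A) for some star body A. -/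
open scoped ENNReal

noncomputable section

lemma zero_mem_of_isStarSet {d : ℕ} {A : Set (EuclideanSpace ℝ (Fin d))}
    (h : IsStarSet A) : (0 : EuclideanSpace ℝ (Fin d)) ∈ A := by
  obtain ⟨⟨a, ha⟩, hs⟩ := h
  simpa using hs a ha 0 le_rfl zero_le_one

lemma smul_mem_iff {d : ℕ} {A : Set (EuclideanSpace ℝ (Fin d))} (hA : IsStarBody A)
    {θ : EuclideanSpace ℝ (Fin d)} (hθ : ‖θ‖ = 1) {r : ℝ} (hr : 0 ≤ r) :
    r • θ ∈ A ↔ ENNReal.ofReal r ≤ radialFn A θ := by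
  constructor
  · intro h
    exact le_sSup ⟨r, ⟨hr, h⟩, rfl⟩
  · intro h
    by_cases htop : radialFn A θ = ⊤
    · have hlt : ENNReal.ofReal r < sSup (ENNReal.ofReal '' {s : ℝ | 0 ≤ s ∧ s • θ ∈ A}) := by
        rw [show sSup (ENNReal.ofReal '' {s : ℝ | 0 ≤ s ∧ s • θ ∈ A}) = radialFn A θ from rfl,
          htop]
        exact ENNReal.ofReal_lt_top
      obtain ⟨b, ⟨s, ⟨hs0, hsA⟩, rfl⟩, hb⟩ := lt_sSup_iff.mp hlt
      have hrs : r < s := (ENNReal.ofReal_lt_ofReal_iff_of_nonneg hr).mp hb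
      have hspos : 0 < s := lt_of_le_of_lt hr hrs
      have := hA.1.2 _ hsA (r / s) (div_nonneg hr hspos.le)
        ((div_le_one hspos).mpr hrs.le)
      rwa [smul_smul, div_mul_cancel₀ _ hspos.ne'] at this
    · set m := (radialFn A θ).toReal with hm
      have hmθ : m • θ ∈ A := hA.2 θ hθ htop
      have hrm : r ≤ m := by
        have := ENNReal.toReal_mono htop h
        rwa [ENNReal.toReal_ofReal hr] at this
      rcases eq_or_lt_of_le (le_trans hr hrm) with hm0 | hmpos
      · have : r = 0 := le_antisymm (hrm.trans hm0.symm.le) hr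
        rw [this, zero_smul]
        exact zero_mem_of_isStarSet hA.1
      · have := hA.1.2 _ hmθ (r / m) (div_nonneg hr hmpos.le)
          ((div_le_one hmpos).mpr hrm)
        rwa [smul_smul, div_mul_cancel₀ _ hmpos.ne'] at this

lemma norm_smul_unit {d : ℕ} {θ : EuclideanSpace ℝ (Fin d)} (hθ : ‖θ‖ = 1) {s : ℝ}
    (hs : 0 ≤ s) : ‖s • θ‖ = s := by
  rw [norm_smul, hθ, mul_one, Real.norm_eq_abs, abs_of_nonneg hs]

/-- Key dichotomy for the radial distance along a ray. -/
lemma radialDist_ray {d : ℕ} {A : Set (EuclideanSpace ℝ (Fin d))} (hA : IsStarBody A)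
    {θ : EuclideanSpace ℝ (Fin d)} (hθ : ‖θ‖ = 1) :
    (∀ s : ℝ, 0 ≤ s → radialDist (s • θ) A = 0) ∨
      ∃ c : ℝ, 0 ≤ c ∧ ∀ s : ℝ, 0 ≤ s → radialDist (s • θ) A = max 0 (s - c) := by
  by_cases htop : radialFn A θ = ⊤
  · left
    intro s hs
    have : s • θ ∈ A := (smul_mem_iff hA hθ hs).mpr (htop ▸ le_top)
    simp [radialDist, this]
  · right
    refine ⟨(radialFn A θ).toReal, ENNReal.toReal_nonneg, fun s hs => ?_⟩
    by_cases hmem : s • θ ∈ A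
    · have hle : s ≤ (radialFn A θ).toReal := by
        have := ENNReal.toReal_mono htop ((smul_mem_iff hA hθ hs).mp hmem)
        rwa [ENNReal.toReal_ofReal hs] at this
      rw [radialDist, if_pos hmem, max_eq_left (by linarith)]
    · have hgt : (radialFn A θ).toReal < s := by
        by_contra hcon
        push_neg at hcon
        exact hmem ((smul_mem_iff hA hθ hs).mpr
          (by rw [← ENNReal.ofReal_toReal htop]; exact ENNReal.ofReal_le_ofReal hcon))
      have hspos : 0 < s := lt_of_le_of_lt ENNReal.toReal_nonneg hgt
      rw [radialDist, if_neg hmem, norm_smul_unit hθ hs, smul_smul,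
        inv_mul_cancel₀ hspos.ne', one_smul, max_eq_right (by linarith)]

lemma radialDist_nonneg {d : ℕ} {A : Set (EuclideanSpace ℝ (Fin d))} (hA : IsStarBody A)
    {θ : EuclideanSpace ℝ (Fin d)} (hθ : ‖θ‖ = 1) {s : ℝ} (hs : 0 ≤ s) :
    0 ≤ radialDist (s • θ) A := by
  rcases radialDist_ray hA hθ with h | ⟨c, _, h⟩
  · rw [h s hs]
  · rw [h s hs]; exact le_max_left _ _

lemma radialDist_mono {d : ℕ} {A : Set (EuclideanSpace ℝ (Fin d))} (hA : IsStarBody A)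
    {θ : EuclideanSpace ℝ (Fin d)} (hθ : ‖θ‖ = 1) {s₁ s₂ : ℝ} (h1 : 0 ≤ s₁) (h12 : s₁ ≤ s₂) :
    radialDist (s₁ • θ) A ≤ radialDist (s₂ • θ) A := by
  rcases radialDist_ray hA hθ with h | ⟨c, _, h⟩
  · rw [h s₁ h1, h s₂ (h1.trans h12)]
  · rw [h s₁ h1, h s₂ (h1.trans h12)]
    exact max_le_max le_rfl (by linarith)

lemma radialDist_lip {d : ℕ} {A : Set (EuclideanSpace ℝ (Fin d))} (hA : IsStarBody A)
    {θ : EuclideanSpace ℝ (Fin d)} (hθ : ‖θ‖ = 1) {s₁ s₂ : ℝ} (h1 : 0 ≤ s₁) (h12 : s₁ ≤ s₂) :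
    radialDist (s₂ • θ) A ≤ radialDist (s₁ • θ) A + (s₂ - s₁) := by
  rcases radialDist_ray hA hθ with h | ⟨c, _, h⟩
  · rw [h s₁ h1, h s₂ (h1.trans h12)]; linarith
  · rw [h s₁ h1, h s₂ (h1.trans h12)]
    have h1' : s₁ - c ≤ max 0 (s₁ - c) := le_max_right _ _
    have h0' : (0:ℝ) ≤ max 0 (s₁ - c) := le_max_left _ _
    exact max_le (by linarith) (by linarith)

lemma radialDist_shift {d : ℕ} {A : Set (EuclideanSpace ℝ (Fin d))} (hA : IsStarBody A)
    {θ : EuclideanSpace ℝ (Fin d)} (hθ : ‖θ‖ = 1) {s₁ s₂ : ℝ} (h1 : 0 ≤ s₁) (h12 : s₁ ≤ s₂)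
    (hpos : 0 < radialDist (s₁ • θ) A) :
    radialDist (s₂ • θ) A = radialDist (s₁ • θ) A + (s₂ - s₁) := by
  rcases radialDist_ray hA hθ with h | ⟨c, _, h⟩
  · rw [h s₁ h1] at hpos; exact absurd hpos (lt_irrefl 0)
  · rw [h s₁ h1] at hpos ⊢
    rw [h s₂ (h1.trans h12)]
    have hc1 : c < s₁ := by
      by_contra hcon
      push_neg at hcon
      rw [max_eq_left (by linarith)] at hpos
      exact absurd hpos (lt_irrefl 0)
    rw [max_eq_right (by linarith), max_eq_right (by linarith)]
    ring

theorem pointwise_limit_of_radialDist {d : ℕ} (A : ℕ → Set (EuclideanSpace ℝ (Fin d)))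
    (hA : ∀ n, IsStarBody (A n)) (f : EuclideanSpace ℝ (Fin d) → ℝ)
    (hf : ∀ x, Filter.Tendsto (fun n => radialDist x (A n)) Filter.atTop (nhds (f x))) :
    ∃ B : Set (EuclideanSpace ℝ (Fin d)), IsStarBody B ∧
      f = fun x => radialDist x B := by
  classical
  have h00 : f 0 = 0 := by
    have h1 : Filter.Tendsto (fun n => radialDist (0 : EuclideanSpace ℝ (Fin d)) (A n))
        Filter.atTop (nhds 0) := by
      have he : (fun n => radialDist (0 : EuclideanSpace ℝ (Fin d)) (A n)) = fun _ => (0:ℝ) := by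
        funext n
        simp [radialDist, zero_mem_of_isStarSet (hA n).1]
      rw [he]; exact tendsto_const_nhds
    exact tendsto_nhds_unique (hf 0) h1
  have hnn : ∀ (θ : EuclideanSpace ℝ (Fin d)), ‖θ‖ = 1 → ∀ s : ℝ, 0 ≤ s → 0 ≤ f (s • θ) :=
    fun θ hθ s hs => ge_of_tendsto (hf _)
      (Filter.Eventually.of_forall fun n => radialDist_nonneg (hA n) hθ hs)
  have hmono : ∀ (θ : EuclideanSpace ℝ (Fin d)), ‖θ‖ = 1 → ∀ s₁ s₂ : ℝ, 0 ≤ s₁ → s₁ ≤ s₂ →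
      f (s₁ • θ) ≤ f (s₂ • θ) :=
    fun θ hθ s₁ s₂ h1 h12 => le_of_tendsto_of_tendsto' (hf _) (hf _)
      fun n => radialDist_mono (hA n) hθ h1 h12
  have hlip : ∀ (θ : EuclideanSpace ℝ (Fin d)), ‖θ‖ = 1 → ∀ s₁ s₂ : ℝ, 0 ≤ s₁ → s₁ ≤ s₂ →
      f (s₂ • θ) ≤ f (s₁ • θ) + (s₂ - s₁) :=
    fun θ hθ s₁ s₂ h1 h12 => le_of_tendsto_of_tendsto' (hf _) ((hf _).add_const _)
      fun n => radialDist_lip (hA n) hθ h1 h12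
  have hshift : ∀ (θ : EuclideanSpace ℝ (Fin d)), ‖θ‖ = 1 → ∀ s₁ s₂ : ℝ, 0 ≤ s₁ → s₁ ≤ s₂ →
      0 < f (s₁ • θ) → f (s₂ • θ) = f (s₁ • θ) + (s₂ - s₁) := by
    intro θ hθ s₁ s₂ h1 h12 hpos
    have hev : ∀ᶠ n in Filter.atTop, 0 < radialDist (s₁ • θ) (A n) :=
      (hf _).eventually (eventually_gt_nhds hpos)
    have hev2 : (fun n => radialDist (s₁ • θ) (A n) + (s₂ - s₁)) =ᶠ[Filter.atTop]
        fun n => radialDist (s₂ • θ) (A n) :=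
      hev.mono fun n hn => (radialDist_shift (hA n) hθ h1 h12 hn).symm
    exact tendsto_nhds_unique (hf _) (((hf (s₁ • θ)).add_const (s₂ - s₁)).congr' hev2)
  have dich : ∀ (θ : EuclideanSpace ℝ (Fin d)), ‖θ‖ = 1 →
      (∀ s : ℝ, 0 ≤ s → f (s • θ) = 0) ∨
      ∃ c : ℝ, 0 ≤ c ∧ ∀ s : ℝ, 0 ≤ s → f (s • θ) = max 0 (s - c) := by
    intro θ hθ
    by_cases hcase : ∀ s : ℝ, 0 ≤ s → f (s • θ) ≤ 0
    · exact Or.inl fun s hs => le_antisymm (hcase s hs) (hnn θ hθ s hs)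
    · push_neg at hcase
      obtain ⟨r₀, hr₀0, hr₀⟩ := hcase
      right
      set Z : Set ℝ := {r | 0 ≤ r ∧ f (r • θ) ≤ 0} with hZ
      have h0Z : (0:ℝ) ∈ Z := ⟨le_rfl, by rw [zero_smul]; exact h00.le⟩
      have hbdd : BddAbove Z := by
        refine ⟨r₀, fun r hr => ?_⟩
        by_contra hcon
        push_neg at hcon
        have h1 := hmono θ hθ r₀ r hr₀0 hcon.le
        have h2 := hr.2
        linarith
      set c := sSup Z with hc
      have hc0 : 0 ≤ c := le_csSup hbdd h0Z
      have hfc : f (c • θ) = 0 := by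
        refine le_antisymm ?_ (hnn θ hθ c hc0)
        have key : ∀ r ∈ Z, r ≤ c - f (c • θ) := by
          intro r hr
          have hrc : r ≤ c := le_csSup hbdd hr
          have h1 := hlip θ hθ r c hr.1 hrc
          have h2 := hr.2
          linarith
        have := csSup_le ⟨0, h0Z⟩ key
        linarith
      refine ⟨c, hc0, fun s hs => ?_⟩
      rcases le_or_gt s c with hsc | hcs
      · rw [max_eq_left (by linarith)]
        exact le_antisymm (hfc ▸ hmono θ hθ s c hs hsc) (hnn θ hθ s hs)
      · have hpos : 0 < f (s • θ) := by
          rcases (hnn θ hθ s hs).lt_or_eq with h | h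
          · exact h
          · exact absurd (le_csSup hbdd ⟨hs, h.symm.le⟩) (not_le.mpr hcs)
        rw [max_eq_right (by linarith)]
        have hub : f (s • θ) ≤ s - c := by
          have := hlip θ hθ c s hc0 hcs.le
          rw [hfc] at this
          linarith
        have hlb : s - c ≤ f (s • θ) := by
          by_contra hcon
          push_neg at hcon
          have h1 : c < s - f (s • θ) := by linarith
          obtain ⟨s', hs1', hs2'⟩ := exists_between h1
          have hs'0 : 0 ≤ s' := le_trans hc0 hs1'.le
          have hs'pos : 0 < f (s' • θ) := by
            rcases (hnn θ hθ s' hs'0).lt_or_eq with h | h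
            · exact h
            · exact absurd (le_csSup hbdd ⟨hs'0, h.symm.le⟩) (not_le.mpr hs1')
          have heq := hshift θ hθ s' s hs'0 (by linarith) hs'pos
          have : s - s' ≤ f (s • θ) := by rw [heq]; linarith
          linarith
        linarith
  -- radial function of the candidate body along rays
  have hρ : ∀ (θ : EuclideanSpace ℝ (Fin d)), ‖θ‖ = 1 → ∀ c : ℝ, 0 ≤ c →
      (∀ s : ℝ, 0 ≤ s → f (s • θ) = max 0 (s - c)) →
      radialFn {x | f x ≤ 0} θ = ENNReal.ofReal c := by
    intro θ hθ c hc0 hF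
    apply le_antisymm
    · apply sSup_le
      rintro b ⟨r, ⟨hr0, hrB⟩, rfl⟩
      have hm : max 0 (r - c) ≤ 0 := by rw [← hF r hr0]; exact hrB
      have : r ≤ c := by
        have := le_max_right (0:ℝ) (r - c)
        linarith
      exact ENNReal.ofReal_le_ofReal this
    · refine le_sSup ⟨c, ⟨hc0, ?_⟩, rfl⟩
      show f (c • θ) ≤ 0
      rw [hF c hc0]
      simp
  have hρtop : ∀ (θ : EuclideanSpace ℝ (Fin d)), ‖θ‖ = 1 →
      (∀ s : ℝ, 0 ≤ s → f (s • θ) = 0) → radialFn {x | f x ≤ 0} θ = ⊤ := by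
    intro θ hθ hF
    by_contra hne
    set a := radialFn {x | f x ≤ 0} θ with ha
    have hle : ENNReal.ofReal (a.toReal + 1) ≤ a := by
      refine le_sSup ⟨a.toReal + 1, ⟨by positivity, ?_⟩, rfl⟩
      show f ((a.toReal + 1) • θ) ≤ 0
      rw [hF _ (by positivity)]
    have hlt : a < ENNReal.ofReal (a.toReal + 1) := by
      conv_lhs => rw [← ENNReal.ofReal_toReal hne]
      exact (ENNReal.ofReal_lt_ofReal_iff (by positivity)).mpr (by linarith)
    exact absurd hle (not_le.mpr hlt)
  refine ⟨{x | f x ≤ 0}, ⟨⟨⟨0, by simp [Set.mem_setOf_eq, h00]⟩, ?_⟩, ?_⟩, ?_⟩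
  · -- star property
    intro a ha t ht0 ht1
    rcases eq_or_ne a 0 with rfl | hane
    · simp [Set.mem_setOf_eq, h00]
    · have hanorm : ‖a‖ ≠ 0 := norm_ne_zero_iff.mpr hane
      set θ := ‖a‖⁻¹ • a with hθdef
      have hθ : ‖θ‖ = 1 := norm_smul_inv_norm hane
      have haθ : a = ‖a‖ • θ := by
        rw [hθdef, smul_smul, mul_inv_cancel₀ hanorm, one_smul]
      have hta : t • a = (t * ‖a‖) • θ := by
        rw [hθdef, smul_smul, mul_assoc, mul_inv_cancel₀ hanorm, mul_one]
      show f (t • a) ≤ 0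
      rw [hta]
      calc f ((t * ‖a‖) • θ) ≤ f (‖a‖ • θ) := by
            refine hmono θ hθ _ _ (by positivity) ?_
            calc t * ‖a‖ ≤ 1 * ‖a‖ := by
                  exact mul_le_mul_of_nonneg_right ht1 (norm_nonneg a)
              _ = ‖a‖ := one_mul _
        _ ≤ 0 := by rw [← haθ]; exact ha
  · -- radially closed
    intro θ hθ hne
    rcases dich θ hθ with h | ⟨c, hc0, hF⟩
    · exact absurd (hρtop θ hθ h) hne
    · rw [hρ θ hθ c hc0 hF, ENNReal.toReal_ofReal hc0]
      show f (c • θ) ≤ 0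
      rw [hF c hc0]
      simp
  · -- f = radialDist · B
    funext x
    rcases eq_or_ne x 0 with rfl | hx
    · have hmem : (0 : EuclideanSpace ℝ (Fin d)) ∈ {x | f x ≤ 0} := by
        simp [Set.mem_setOf_eq, h00]
      simp [radialDist, hmem, h00]
    · have hxnorm : ‖x‖ ≠ 0 := norm_ne_zero_iff.mpr hx
      set θ := ‖x‖⁻¹ • x with hθdef
      have hθ : ‖θ‖ = 1 := norm_smul_inv_norm hx
      have hxθ : x = ‖x‖ • θ := by
        rw [hθdef, smul_smul, mul_inv_cancel₀ hxnorm, one_smul]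
      rcases dich θ hθ with h | ⟨c, hc0, hF⟩
      · have hfx : f x = 0 := by
          have := h ‖x‖ (norm_nonneg x)
          rwa [← hxθ] at this
        have hmem : x ∈ {x | f x ≤ 0} := hfx.le
        simp [radialDist, hmem, hfx]
      · have hfx : f x = max 0 (‖x‖ - c) := by
          have := hF ‖x‖ (norm_nonneg x)
          rwa [← hxθ] at this
        rcases le_or_gt ‖x‖ c with hlc | hgt
        · have hfx0 : f x = 0 := by rw [hfx, max_eq_left (by linarith)]
          have hmem : x ∈ {x | f x ≤ 0} := hfx0.le
          simp [radialDist, hmem, hfx0]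
        · have hfx' : f x = ‖x‖ - c := by rw [hfx, max_eq_right (by linarith)]
          have hnmem : x ∉ {x | f x ≤ 0} := by
            simp only [Set.mem_setOf_eq, not_le]
            rw [hfx']
            linarith
          rw [radialDist, if_neg hnmem, ← hθdef, hρ θ hθ c hc0 hF,
            ENNReal.toReal_ofReal hc0, hfx']
end
end

section
/- On the family of bounded star bodies in ℝ^d, the radial metric δ and the radial Attouch–Wets distance d_{AW^r} generate the same topology. -/
open scoped ENNReal

noncomputable section

/-- The radial metric between star bodies. -/
def radialMetric {d : ℕ} (A₁ A₂ : Set (EuclideanSpace ℝ (Fin d))) : ℝ :=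
  ⨆ θ : Metric.sphere (0 : EuclideanSpace ℝ (Fin d)) 1,
    |(radialFn A₁ (θ : EuclideanSpace ℝ (Fin d))).toReal -
      (radialFn A₂ (θ : EuclideanSpace ℝ (Fin d))).toReal|


/-- The radial Attouch–Wets distance between star bodies. -/
def dAWr {d : ℕ} (A₁ A₂ : Set (EuclideanSpace ℝ (Fin d))) : ℝ :=
  ⨆ j : ℕ, min (1 / ((j : ℝ) + 1))
    (⨆ x : Metric.closedBall (0 : EuclideanSpace ℝ (Fin d)) ((j : ℝ) + 1),
      |radialDist (x : EuclideanSpace ℝ (Fin d)) A₁ -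
        radialDist (x : EuclideanSpace ℝ (Fin d)) A₂|)

lemma radialFn_props {d : ℕ} {A : Set (EuclideanSpace ℝ (Fin d))}
    (hA : IsStarBody A) {M : ℝ} (hM : ∀ a ∈ A, ‖a‖ ≤ M)
    {θ : EuclideanSpace ℝ (Fin d)} (hθ : ‖θ‖ = 1) :
    0 ≤ (radialFn A θ).toReal ∧ (radialFn A θ).toReal ≤ M ∧
      ∀ r : ℝ, 0 ≤ r → (r • θ ∈ A ↔ r ≤ (radialFn A θ).toReal) := by
  set S : Set ℝ := {r : ℝ | 0 ≤ r ∧ r • θ ∈ A} with hSdef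
  have h0S : (0:ℝ) ∈ S := ⟨le_rfl, by simpa using zero_mem_of_isStarSet hA.1⟩
  have hSM : ∀ r ∈ S, r ≤ M := by
    rintro r ⟨hr0, hrA⟩
    have := hM _ hrA
    rwa [norm_smul, hθ, mul_one, Real.norm_eq_abs, abs_of_nonneg hr0] at this
  have hbdd : BddAbove S := ⟨M, hSM⟩
  have hne : S.Nonempty := ⟨0, h0S⟩
  have hS0 : (0:ℝ) ≤ sSup S := le_csSup hbdd h0S
  have key : radialFn A θ = ENNReal.ofReal (sSup S) := by
    rw [radialFn]
    exact (Monotone.map_csSup_of_continuousAt ENNReal.continuous_ofReal.continuousAt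
      (fun a b h => ENNReal.ofReal_le_ofReal h) hne hbdd).symm
  have hne_top : radialFn A θ ≠ ⊤ := by rw [key]; exact ENNReal.ofReal_ne_top
  have htr : (radialFn A θ).toReal = sSup S := by
    rw [key, ENNReal.toReal_ofReal hS0]
  refine ⟨by rw [htr]; exact hS0, by rw [htr]; exact csSup_le hne hSM, ?_⟩
  intro r hr
  rw [htr]
  constructor
  · intro hrA
    exact le_csSup hbdd ⟨hr, hrA⟩
  · intro hrle
    have hsup_mem : sSup S • θ ∈ A := by
      have := hA.2 θ hθ hne_top
      rwa [htr] at this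
    rcases eq_or_lt_of_le hS0 with h0 | h0
    · have : r = 0 := le_antisymm (by rw [← h0] at hrle; exact hrle) hr
      rw [this]
      simpa using zero_mem_of_isStarSet hA.1
    · have ht0 : 0 ≤ r / sSup S := div_nonneg hr hS0
      have ht1 : r / sSup S ≤ 1 := div_le_one_of_le₀ hrle hS0
      have := hA.1.2 _ hsup_mem _ ht0 ht1
      rwa [smul_smul, div_mul_cancel₀ _ (ne_of_gt h0)] at this

lemma radialDist_eq {d : ℕ} {A : Set (EuclideanSpace ℝ (Fin d))}
    (hA : IsStarBody A) {M : ℝ} (hM : ∀ a ∈ A, ‖a‖ ≤ M)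
    (x : EuclideanSpace ℝ (Fin d)) :
    radialDist x A = max 0 (‖x‖ - (radialFn A (‖x‖⁻¹ • x)).toReal) := by
  by_cases hx : x = 0
  · subst hx
    have h0A : (0 : EuclideanSpace ℝ (Fin d)) ∈ A := zero_mem_of_isStarSet hA.1
    rw [radialDist, if_pos h0A]
    have ht : (0:ℝ) ≤ (radialFn A (‖(0:EuclideanSpace ℝ (Fin d))‖⁻¹ •
        (0:EuclideanSpace ℝ (Fin d)))).toReal := ENNReal.toReal_nonneg
    have hn : ‖(0:EuclideanSpace ℝ (Fin d))‖ = 0 := norm_zero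
    symm
    rw [max_eq_left]
    linarith
  · have hxn : (0:ℝ) < ‖x‖ := norm_pos_iff.mpr hx
    set θ := ‖x‖⁻¹ • x with hθdef
    have hθ : ‖θ‖ = 1 := by
      rw [hθdef, norm_smul, Real.norm_eq_abs, abs_of_pos (inv_pos.mpr hxn),
        inv_mul_cancel₀ (ne_of_gt hxn)]
    have hxθ : ‖x‖ • θ = x := by
      rw [hθdef, smul_smul, mul_inv_cancel₀ (ne_of_gt hxn), one_smul]
    obtain ⟨_, _, hiff⟩ := radialFn_props hA hM hθ
    by_cases hxA : x ∈ A
    · rw [radialDist, if_pos hxA]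
      have : ‖x‖ ≤ (radialFn A θ).toReal := (hiff ‖x‖ hxn.le).mp (by rwa [hxθ])
      symm
      rw [max_eq_left]
      linarith
    · rw [radialDist, if_neg hxA]
      have : ¬ (‖x‖ ≤ (radialFn A θ).toReal) := fun h => hxA (by
        have := (hiff ‖x‖ hxn.le).mpr h
        rwa [hxθ] at this)
      symm
      rw [max_eq_right]
      push_neg at this
      linarith

lemma radialDist_zero {d : ℕ} {A : Set (EuclideanSpace ℝ (Fin d))}
    (hA : IsStarBody A) : radialDist (0 : EuclideanSpace ℝ (Fin d)) A = 0 := by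
  rw [radialDist, if_pos (zero_mem_of_isStarSet hA.1)]

lemma abs_max_zero_sub (R a b : ℝ) : |max 0 (R - a) - max 0 (R - b)| ≤ |a - b| := by
  have h := abs_max_sub_max_le_abs (R - a) (R - b) 0
  rw [max_comm (R - a) 0, max_comm (R - b) 0] at h
  refine h.trans_eq ?_
  have he : R - a - (R - b) = -(a - b) := by ring
  rw [he, abs_neg]

lemma radialDist_nonneg_le {d : ℕ} {A : Set (EuclideanSpace ℝ (Fin d))}
    (hA : IsStarBody A) {M : ℝ} (hM : ∀ a ∈ A, ‖a‖ ≤ M)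
    (x : EuclideanSpace ℝ (Fin d)) :
    0 ≤ radialDist x A ∧ radialDist x A ≤ ‖x‖ := by
  rw [radialDist_eq hA hM x]
  refine ⟨le_max_left _ _, ?_⟩
  have : (0:ℝ) ≤ (radialFn A (‖x‖⁻¹ • x)).toReal := ENNReal.toReal_nonneg
  apply max_le (norm_nonneg x)
  linarith

theorem radialMetric_dAWr_same_topology {d : ℕ} :
    (∀ A : Set (EuclideanSpace ℝ (Fin d)), IsStarBody A → Bornology.IsBounded A →
      ∀ ε : ℝ, 0 < ε → ∃ δ : ℝ, 0 < δ ∧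
        ∀ X : Set (EuclideanSpace ℝ (Fin d)), IsStarBody X → Bornology.IsBounded X →
          radialMetric A X < δ → dAWr A X < ε) ∧
    (∀ A : Set (EuclideanSpace ℝ (Fin d)), IsStarBody A → Bornology.IsBounded A →
      ∀ ε : ℝ, 0 < ε → ∃ δ : ℝ, 0 < δ ∧
        ∀ X : Set (EuclideanSpace ℝ (Fin d)), IsStarBody X → Bornology.IsBounded X →
          dAWr A X < δ → radialMetric A X < ε) := by
  constructor
  · -- radialMetric controls dAWr
    intro A hA hAb ε hε
    refine ⟨ε, hε, ?_⟩
    intro X hX hXb hrm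
    obtain ⟨MA, hMA⟩ := hAb.exists_norm_le
    obtain ⟨MX, hMX⟩ := hXb.exists_norm_le
    have hrm0 : 0 ≤ radialMetric A X := Real.iSup_nonneg fun θ => abs_nonneg _
    have hle : dAWr A X ≤ radialMetric A X := by
      rw [dAWr]
      apply Real.iSup_le _ hrm0
      intro j
      refine le_trans (min_le_right _ _) ?_
      apply Real.iSup_le _ hrm0
      rintro ⟨x, hxball⟩
      simp only
      by_cases hx : x = 0
      · subst hx
        rw [radialDist_zero hA, radialDist_zero hX]
        simpa using hrm0
      · rw [radialDist_eq hA hMA x, radialDist_eq hX hMX x]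
        have hxn : (0:ℝ) < ‖x‖ := norm_pos_iff.mpr hx
        set θ := ‖x‖⁻¹ • x with hθdef
        have hθ : ‖θ‖ = 1 := by
          rw [hθdef, norm_smul, Real.norm_eq_abs, abs_of_pos (inv_pos.mpr hxn),
            inv_mul_cancel₀ (ne_of_gt hxn)]
        have hθmem : θ ∈ Metric.sphere (0 : EuclideanSpace ℝ (Fin d)) 1 := by
          simpa [mem_sphere_iff_norm] using hθ
        have step1 : |max 0 (‖x‖ - (radialFn A θ).toReal) - max 0 (‖x‖ - (radialFn X θ).toReal)|
            ≤ |(radialFn A θ).toReal - (radialFn X θ).toReal| :=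
          abs_max_zero_sub ‖x‖ _ _
        refine step1.trans ?_
        -- now ≤ radialMetric
        have hbdd : BddAbove (Set.range fun θ' : Metric.sphere (0 : EuclideanSpace ℝ (Fin d)) 1 =>
            |(radialFn A (θ' : EuclideanSpace ℝ (Fin d))).toReal -
              (radialFn X (θ' : EuclideanSpace ℝ (Fin d))).toReal|) := by
          refine ⟨MA + MX, ?_⟩
          rintro y ⟨θ', rfl⟩
          have hθ' : ‖(θ' : EuclideanSpace ℝ (Fin d))‖ = 1 := by
            have := θ'.2
            simpa [mem_sphere_iff_norm] using this
          obtain ⟨ha0, haM, _⟩ := radialFn_props hA hMA hθ'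
          obtain ⟨hb0, hbM, _⟩ := radialFn_props hX hMX hθ'
          rw [abs_sub_le_iff]
          constructor <;> linarith
        exact le_ciSup hbdd (⟨θ, hθmem⟩ : Metric.sphere (0 : EuclideanSpace ℝ (Fin d)) 1)
    linarith
  · -- dAWr controls radialMetric
    intro A hA hAb ε hε
    obtain ⟨MA', hMA'⟩ := hAb.exists_norm_le
    set MA := max MA' 0 with hMAdef
    have hMA : ∀ a ∈ A, ‖a‖ ≤ MA := fun a ha => (hMA' a ha).trans (le_max_left _ _)
    have hMA0 : (0:ℝ) ≤ MA := le_max_right _ _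
    obtain ⟨N, hN⟩ := exists_nat_ge (MA + ε)
    set R : ℝ := (N : ℝ) + 1 with hRdef
    have hR : MA + ε < R := by rw [hRdef]; linarith
    have hR0 : (0:ℝ) < R := by linarith
    set δ : ℝ := min (ε / 2) (1 / R) with hδdef
    have hδ0 : 0 < δ := lt_min (by linarith) (by positivity)
    refine ⟨δ, hδ0, ?_⟩
    intro X hX hXb hdaw
    obtain ⟨MX, hMX⟩ := hXb.exists_norm_le
    -- inner sup at level N is < δ
    have hterm_le : min (1 / R)
        (⨆ x : Metric.closedBall (0 : EuclideanSpace ℝ (Fin d)) R,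
          |radialDist (x : EuclideanSpace ℝ (Fin d)) A -
            radialDist (x : EuclideanSpace ℝ (Fin d)) X|) ≤ dAWr A X := by
      rw [dAWr]
      have hbdd : BddAbove (Set.range fun j : ℕ => min (1 / ((j : ℝ) + 1))
          (⨆ x : Metric.closedBall (0 : EuclideanSpace ℝ (Fin d)) ((j : ℝ) + 1),
            |radialDist (x : EuclideanSpace ℝ (Fin d)) A -
              radialDist (x : EuclideanSpace ℝ (Fin d)) X|)) := by
        refine ⟨1, ?_⟩
        rintro y ⟨j, rfl⟩
        refine le_trans (min_le_left _ _) ?_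
        rw [div_le_one (by positivity)]
        linarith [Nat.cast_nonneg (α := ℝ) j]
      exact le_ciSup hbdd N
    have hinner_lt : (⨆ x : Metric.closedBall (0 : EuclideanSpace ℝ (Fin d)) R,
        |radialDist (x : EuclideanSpace ℝ (Fin d)) A -
          radialDist (x : EuclideanSpace ℝ (Fin d)) X|) < δ := by
      have hmin : min (1 / R) (⨆ x : Metric.closedBall (0 : EuclideanSpace ℝ (Fin d)) R,
          |radialDist (x : EuclideanSpace ℝ (Fin d)) A -
            radialDist (x : EuclideanSpace ℝ (Fin d)) X|) < δ :=
        lt_of_le_of_lt hterm_le hdaw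
      rcases min_lt_iff.mp hmin with h | h
      · exact absurd h (not_lt.mpr (min_le_right _ _))
      · exact h
    -- pointwise bound on the inner sup
    have hinner_bdd : BddAbove (Set.range fun x : Metric.closedBall
        (0 : EuclideanSpace ℝ (Fin d)) R =>
        |radialDist (x : EuclideanSpace ℝ (Fin d)) A -
          radialDist (x : EuclideanSpace ℝ (Fin d)) X|) := by
      refine ⟨R, ?_⟩
      rintro y ⟨⟨x, hxb⟩, rfl⟩
      have hxn : ‖x‖ ≤ R := by simpa [Metric.mem_closedBall, dist_eq_norm] using hxb
      obtain ⟨ha0, haN⟩ := radialDist_nonneg_le hA hMA x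
      obtain ⟨hb0, hbN⟩ := radialDist_nonneg_le hX hMX x
      simp only
      rw [abs_sub_le_iff]
      constructor <;> linarith
    -- per-direction bound
    have hdir : ∀ θ : Metric.sphere (0 : EuclideanSpace ℝ (Fin d)) 1,
        |(radialFn A (θ : EuclideanSpace ℝ (Fin d))).toReal -
          (radialFn X (θ : EuclideanSpace ℝ (Fin d))).toReal| ≤ ε / 2 := by
      rintro ⟨θ, hθmem⟩
      have hθ : ‖θ‖ = 1 := by simpa [mem_sphere_iff_norm] using hθmem
      set x : EuclideanSpace ℝ (Fin d) := R • θ with hxdef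
      have hxn : ‖x‖ = R := by
        rw [hxdef, norm_smul, Real.norm_eq_abs, abs_of_pos hR0, hθ, mul_one]
      have hxball : x ∈ Metric.closedBall (0 : EuclideanSpace ℝ (Fin d)) R := by
        simp [Metric.mem_closedBall, dist_eq_norm, hxn]
      have hxθ : ‖x‖⁻¹ • x = θ := by
        rw [hxn, hxdef, smul_smul, inv_mul_cancel₀ (ne_of_gt hR0), one_smul]
      have hxlt : |radialDist x A - radialDist x X| < δ :=
        lt_of_le_of_lt (le_ciSup hinner_bdd
          (⟨x, hxball⟩ : Metric.closedBall (0 : EuclideanSpace ℝ (Fin d)) R)) hinner_lt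
      obtain ⟨hA0, hAM, _⟩ := radialFn_props hA hMA hθ
      obtain ⟨hX0, hXM, _⟩ := radialFn_props hX hMX hθ
      rw [radialDist_eq hA hMA x, radialDist_eq hX hMX x, hxθ, hxn] at hxlt
      have hdA : max 0 (R - (radialFn A θ).toReal) = R - (radialFn A θ).toReal := by
        rw [max_eq_right]; linarith
      rw [hdA] at hxlt
      -- show R - ρ_X(θ) > 0
      have hXlt : (radialFn X θ).toReal < R := by
        by_contra hcon
        push_neg at hcon
        have : max 0 (R - (radialFn X θ).toReal) = 0 := by
          rw [max_eq_left]; linarith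
        rw [this, sub_zero] at hxlt
        have h1 : R - (radialFn A θ).toReal ≥ ε := by linarith
        have h2 : |R - (radialFn A θ).toReal| = R - (radialFn A θ).toReal :=
          abs_of_nonneg (by linarith)
        rw [h2] at hxlt
        have : δ ≤ ε / 2 := min_le_left _ _
        linarith
      have hdX : max 0 (R - (radialFn X θ).toReal) = R - (radialFn X θ).toReal := by
        rw [max_eq_right]; linarith
      rw [hdX] at hxlt
      have heq : R - (radialFn A θ).toReal - (R - (radialFn X θ).toReal)
          = (radialFn X θ).toReal - (radialFn A θ).toReal := by ring
      rw [heq, abs_sub_comm] at hxlt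
      have : δ ≤ ε / 2 := min_le_left _ _
      linarith
    have : radialMetric A X ≤ ε / 2 := by
      rw [radialMetric]
      exact Real.iSup_le hdir (by linarith)
    linarith
end
end
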